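/- For every integer k ≥ 1 and every t ∈ {1, 2, …, M}, a_{kM+t} ≤ a_{l(k)} + (η_{kM} + η_{kM+1} + ⋯ + η_{kM+t−1}) − Δ_{kM+t−1}². -/
import Mathlib


/-- Inductive inequality within a block: for every k ≥ 1 and t ∈ {1,…,M},
  a_{kM+t} ≤ a_{l(k)} + (η_{kM} + ⋯ + η_{kM+t−1}) − Δ_{kM+t−1}². -/
theorem stmt_1 (M : ℕ) (hM : 1 ≤ M)
    (a Δ η : ℕ → ℝ)
    (hΔ : ∀ k, 0 < Δ k) (hη : ∀ k, 0 < η k)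
    (hdec : ∀ k : ℕ,
      a (k + 1) ≤ (Finset.range (min k (M - 1) + 1)).sup'
          (Finset.nonempty_range_iff.mpr (Nat.succ_ne_zero _)) (fun j => a (k - j))
        + η k - (Δ k) ^ 2)
    (l : ℕ → ℕ)
    (hl_lb : ∀ k, 1 ≤ k → k * M - (M - 1) ≤ l k)
    (hl_ub : ∀ k, 1 ≤ k → l k ≤ k * M)
    (hl_max : ∀ k, 1 ≤ k →
      a (l k) = (Finset.range M).sup'
          (Finset.nonempty_range_iff.mpr (by omega)) (fun j => a (k * M - j))) :
    ∀ k : ℕ, 1 ≤ k → ∀ t : ℕ, 1 ≤ t → t ≤ M →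
      a (k * M + t) ≤ a (l k) + (∑ j ∈ Finset.range t, η (k * M + j))
        - (Δ (k * M + t - 1)) ^ 2 := by
  intro k hk
  have hkM : M ≤ k * M := Nat.le_mul_of_pos_left M hk
  intro t
  induction t using Nat.strong_induction_on with
  | _ t ih =>
    intro ht1 htM
    have key := hdec (k * M + t - 1)
    have e1 : k * M + t - 1 + 1 = k * M + t := by omega
    have e2 : min (k * M + t - 1) (M - 1) + 1 = M := by omega
    rw [e1] at key
    have hsum : ∑ j ∈ Finset.range t, η (k * M + j)
        = (∑ j ∈ Finset.range (t - 1), η (k * M + j)) + η (k * M + t - 1) := by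
      have : t = (t - 1) + 1 := by omega
      rw [this, Finset.sum_range_succ]
      simp only [Nat.add_sub_cancel, Nat.add_sub_cancel_left]
      have h9 : k * M + (t - 1 + 1) - 1 = k * M + (t - 1) := by omega
      rw [h9]
    rw [hsum]
    have hsup : (Finset.range (min (k * M + t - 1) (M - 1) + 1)).sup'
        (Finset.nonempty_range_iff.mpr (Nat.succ_ne_zero _)) (fun j => a (k * M + t - 1 - j))
        ≤ a (l k) + ∑ j ∈ Finset.range (t - 1), η (k * M + j) := by
      apply Finset.sup'_le
      intro j hj
      simp only [Finset.mem_range] at hj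
      have hj : j < M := by omega
      by_cases hjt : t - 1 ≤ j
      · -- index is k*M - (j - (t-1))
        have hidx : k * M + t - 1 - j = k * M - (j - (t - 1)) := by omega
        rw [hidx]
        have hmem : j - (t - 1) ∈ Finset.range M := Finset.mem_range.mpr (by omega)
        have hle : a (k * M - (j - (t - 1))) ≤ a (l k) := by
          rw [hl_max k hk]
          exact Finset.le_sup' (fun j => a (k * M - j)) hmem
        have hnn : (0:ℝ) ≤ ∑ j ∈ Finset.range (t - 1), η (k * M + j) :=
          Finset.sum_nonneg fun i _ => (hη _).le
        linarith
      · -- index is k*M + s with s = t-1-j, 1 ≤ s < t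
        push_neg at hjt
        set s := t - 1 - j with hs
        have hidx : k * M + t - 1 - j = k * M + s := by omega
        rw [hidx]
        have h1 : 1 ≤ s := by omega
        have h2 : s < t := by omega
        have h3 : s ≤ M := by omega
        have := ih s h2 h1 h3
        have hΔnn : (0:ℝ) ≤ (Δ (k * M + s - 1)) ^ 2 := sq_nonneg _
        have hmono : ∑ i ∈ Finset.range s, η (k * M + i)
            ≤ ∑ i ∈ Finset.range (t - 1), η (k * M + i) := by
          apply Finset.sum_le_sum_of_subset_of_nonneg
          · exact Finset.range_subset_range.mpr (by omega)
          · intro i _ _; exact (hη _).le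
        linarith
    linarith
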